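/- Let 𝔤 be a nonabelian finite simple Lie algebra over 𝔽_p of dimension d, and let A be a generating set of 𝔤. For subsets X,Y ⊆ 𝔤 write X+Y and [X,Y] for elementwise sum and bracket, and define A^1 = {0} ∪ A and A^k = ⋃_{0<j<k} ((A^j + A^{k−j}) ∪ [A^j, A^{k−j}]). Suppose A^k contains an entire line: there is a nonzero v ∈ 𝔤 with α·v ∈ A^k for all α ∈ 𝔽_p. Then A^{k·d + d²} = 𝔤; in particular diam(𝔤, A) ≤ k·d + d². -/

import Mathlib

/-! The spans of the towers `[a_j, [ …, [a_1, v]]]` (`a_i ∈ A`, `j ≤ m`) grow strictly with `m`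
until one of them is stable under `ad A`; as `A` generates `𝔤`, that span is then an ideal
containing `v ≠ 0`, hence `𝔤`. So towers with `m < d` span `𝔤`. Bracketing the line
`𝔽_p · v ⊆ A^k` successively with the `a_i ∈ A^1` puts every multiple of such a tower in
`A^{k+d-1}`, and a basis of `𝔤` made of towers writes every element as a sum of `d` of these. -/

variable {L : Type*} [LieRing L]

/-- The ball `A^k`: `A^1 = {0} ∪ A`,
`A^k = ⋃_{0<j<k} ((A^j + A^{k-j}) ∪ [A^j, A^{k-j}])`. -/
def ball (A : Set L) : ℕ → Set L
  | 0 => ∅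
  | 1 => insert 0 A
  | (n + 2) =>
      ⋃ (j : ℕ) (_ : 0 < j) (_ : j < n + 2),
        (Set.image2 (· + ·) (ball A j) (ball A (n + 2 - j)) ∪
          Set.image2 (fun x y => ⁅x, y⁆) (ball A j) (ball A (n + 2 - j)))
  termination_by k => k
  decreasing_by all_goals omega

section Ball

variable {A : Set L} {a b n : ℕ}

@[simp]
lemma ball_zero : ball A 0 = ∅ := by
  rw [ball]

lemma ball_one : ball A 1 = insert 0 A := by
  rw [ball]

lemma pos_of_mem_ball {x : L} (hx : x ∈ ball A n) : 0 < n := by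
  rcases n with _ | n
  · simp at hx
  · exact n.succ_pos

lemma image2_union_image2_subset_ball (ha : 0 < a) (hb : 0 < b) :
    Set.image2 (· + ·) (ball A a) (ball A b) ∪ Set.image2 (fun x y => ⁅x, y⁆) (ball A a) (ball A b)
      ⊆ ball A (a + b) := by
  obtain ⟨n, hn⟩ : ∃ n, a + b = n + 2 := ⟨a + b - 2, by omega⟩
  have hb' : n + 2 - a = b := by omega
  rw [hn, ball]
  exact Set.subset_iUnion₂_of_subset a ha <| Set.subset_iUnion_of_subset (by omega) <| by rw [hb']

lemma add_mem_ball (ha : 0 < a) (hb : 0 < b) {x y : L} (hx : x ∈ ball A a) (hy : y ∈ ball A b) :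
    x + y ∈ ball A (a + b) :=
  image2_union_image2_subset_ball ha hb (Or.inl (Set.mem_image2_of_mem hx hy))

lemma lie_mem_ball (ha : 0 < a) (hb : 0 < b) {x y : L} (hx : x ∈ ball A a) (hy : y ∈ ball A b) :
    ⁅x, y⁆ ∈ ball A (a + b) :=
  image2_union_image2_subset_ball ha hb (Or.inr (Set.mem_image2_of_mem hx hy))

lemma zero_mem_ball (hn : 0 < n) : (0 : L) ∈ ball A n := by
  induction n, hn using Nat.le_induction with
  | base => simp [ball_one]
  | succ n hn ih => simpa using add_mem_ball hn one_pos ih (by simp [ball_one])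

lemma ball_mono (ha : 0 < a) (hab : a ≤ b) : ball A a ⊆ ball A b := by
  obtain ⟨c, rfl⟩ := Nat.exists_eq_add_of_le hab
  rcases c.eq_zero_or_pos with rfl | hc
  · rfl
  · intro x hx
    simpa using add_mem_ball ha hc hx (zero_mem_ball hc)

lemma sum_mem_ball {ι : Type*} {s : Finset ι} (hs : s.Nonempty) {f : ι → L} (hn : 0 < n)
    (hf : ∀ i ∈ s, f i ∈ ball A n) : ∑ i ∈ s, f i ∈ ball A (s.card * n) := by
  induction s using Finset.cons_induction with
  | empty => simp at hs
  | cons i t hit ih =>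
    rw [Finset.sum_cons, Finset.card_cons]
    rcases t.eq_empty_or_nonempty with rfl | ht
    · simpa using hf i (by simp)
    · have hrest := ih ht fun j hj => hf j (Finset.mem_cons_of_mem hj)
      have := add_mem_ball hn (Nat.mul_pos ht.card_pos hn) (hf i (Finset.mem_cons_self i t)) hrest
      rwa [add_comm, ← Nat.succ_mul] at this

end Ball

/-- Relative towers over `A` based at `v` of length `≤ m`: the `[a_j, [ …, [a_1, v]]]`, `j ≤ m`. -/
def towers (A : Set L) (v : L) : ℕ → Set L
  | 0 => {v}
  | m + 1 => towers A v m ∪ Set.image2 (fun a x => ⁅a, x⁆) A (towers A v m)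

lemma towers_subset_succ (A : Set L) (v : L) (m : ℕ) : towers A v m ⊆ towers A v (m + 1) :=
  Set.subset_union_left

lemma self_mem_towers (A : Set L) (v : L) (m : ℕ) : v ∈ towers A v m := by
  induction m with
  | zero => rfl
  | succ m ih => exact towers_subset_succ A v m ih

section CommRing

variable {R : Type*} [CommRing R] [LieAlgebra R L]

lemma smul_mem_ball_of_mem_towers {A : Set L} {v : L} {k : ℕ} (hline : ∀ α : R, α • v ∈ ball A k)
    {m : ℕ} {w : L} (hw : w ∈ towers A v m) (α : R) :
    α • w ∈ ball A (k + m) := by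
  have hk : 0 < k := pos_of_mem_ball (hline 0)
  induction m generalizing w with
  | zero =>
    rw [towers, Set.mem_singleton_iff] at hw
    exact hw ▸ hline α
  | succ m ih =>
    rcases hw with hw | ⟨a, ha, x, hx, rfl⟩
    · exact ball_mono (by omega) (by omega) (ih hw)
    · have := lie_mem_ball one_pos (by omega) (by simp [ball_one, ha] : a ∈ ball A 1) (ih hx)
      rwa [lie_smul, add_comm 1, add_assoc] at this

lemma lie_mem_of_lieSpan_eq_top {A : Set L} (hA : LieSubalgebra.lieSpan R L A = ⊤)
    {M : Submodule R L} (hM : ∀ a ∈ A, ∀ x ∈ M, ⁅a, x⁆ ∈ M) (z : L) {x : L} (hx : x ∈ M) :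
    ⁅z, x⁆ ∈ M := by
  have hz : z ∈ LieSubalgebra.lieSpan R L A := hA ▸ LieSubalgebra.mem_top z
  induction hz using LieSubalgebra.lieSpan_induction generalizing x with
  | mem a ha => exact hM a ha x hx
  | zero => simp
  | add y y' _ _ hy hy' => simpa only [add_lie] using M.add_mem (hy hx) (hy' hx)
  | smul c y _ hy => simpa only [smul_lie] using M.smul_mem c (hy hx)
  | lie y y' _ _ hy hy' => simpa only [lie_lie] using M.sub_mem (hy (hy' hx)) (hy' (hy hx))

lemma eq_top_of_lie_mem_of_lieSpan_eq_top [LieAlgebra.IsSimple R L] {A : Set L}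
    (hA : LieSubalgebra.lieSpan R L A = ⊤) {M : Submodule R L} (hM : ∀ a ∈ A, ∀ x ∈ M, ⁅a, x⁆ ∈ M)
    {v : L} (hv : v ≠ 0) (hvM : v ∈ M) : M = ⊤ := by
  let I : LieIdeal R L := { M with lie_mem := fun {z _} hx => lie_mem_of_lieSpan_eq_top hA hM z hx }
  rcases LieAlgebra.IsSimple.eq_bot_or_eq_top I with h | h
  · exact absurd (show v ∈ I from hvM) (h ▸ hv)
  · exact Submodule.eq_top_iff'.2 fun x => show x ∈ I from h ▸ LieSubmodule.mem_top x

end CommRing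

section Span

variable {K : Type*} [Field K] [LieAlgebra K L]

lemma Submodule.eq_top_of_monotone_of_succ_le {V : Type*} [AddCommGroup V] [Module K V]
    [FiniteDimensional K V] {T : ℕ → Submodule K V} (hT : Monotone T) (h0 : T 0 ≠ ⊥)
    (hsucc : ∀ m, T (m + 1) ≤ T m → T m = ⊤) : T (Module.finrank K V - 1) = ⊤ := by
  have hgrow : ∀ m, T m = ⊤ ∨ m + 1 ≤ Module.finrank K (T m) := by
    intro m
    induction m with
    | zero => exact .inr (Nat.one_le_iff_ne_zero.2 (mt Submodule.finrank_eq_zero.1 h0))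
    | succ m ih =>
      by_cases hle : T (m + 1) ≤ T m
      · exact .inl (top_le_iff.1 (hsucc m hle ▸ hT (Nat.le_add_right m 1)))
      · rcases ih with h | h
        · exact .inl (top_le_iff.1 (h ▸ hT (Nat.le_add_right m 1)))
        · have := Submodule.finrank_lt_finrank_of_lt ((hT (Nat.le_add_right m 1)).lt_of_not_ge hle)
          exact .inr (by omega)
  refine (hgrow _).elim id fun h => Submodule.eq_top_of_finrank_eq ?_
  have := Submodule.finrank_le (T (Module.finrank K V - 1))
  omega

lemma span_towers_eq_top [Module.Finite K L] [LieAlgebra.IsSimple K L] {A : Set L}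
    (hA : LieSubalgebra.lieSpan K L A = ⊤) {v : L} (hv : v ≠ 0) :
    Submodule.span K (towers A v (Module.finrank K L - 1)) = ⊤ := by
  refine Submodule.eq_top_of_monotone_of_succ_le
    (monotone_nat_of_le_succ fun m => Submodule.span_mono (towers_subset_succ A v m)) ?_ ?_
  · simpa [towers] using hv
  · intro m hle
    refine eq_top_of_lie_mem_of_lieSpan_eq_top hA (fun a ha x hx => hle ?_) hv
      (Submodule.subset_span (self_mem_towers A v m))
    have hmap : Submodule.map (LieAlgebra.ad K L a) (Submodule.span K (towers A v m))
        ≤ Submodule.span K (towers A v (m + 1)) := by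
      rw [Submodule.map_span]
      exact Submodule.span_mono (Set.image_subset_iff.2 fun w hw =>
        Or.inr (Set.mem_image2_of_mem ha hw))
    exact hmap (Submodule.mem_map_of_mem hx)

lemma mem_ball_of_span_eq_top [Module.Finite K L] [Nontrivial L] {A : Set L} {s : Set L}
    (hs : Submodule.span K s = ⊤) {n : ℕ} (hn : 0 < n) (hsn : ∀ w ∈ s, ∀ α : K, α • w ∈ ball A n)
    (x : L) : x ∈ ball A (Module.finrank K L * n) := by
  let b := Module.Basis.ofSpan hs.ge
  have := @Fintype.ofFinite _ (Module.Finite.finite_basis b)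
  rw [← b.sum_repr x, Module.finrank_eq_card_basis b, ← Finset.card_univ]
  have := b.index_nonempty
  exact sum_mem_ball Finset.univ_nonempty hn fun i _ =>
    hsn _ (Module.Basis.ofSpan_subset hs.ge (Set.mem_range_self i)) _

end Span

/-- If a generating set `A` of a nonabelian finite simple Lie algebra `𝔤` over `𝔽_p` of
dimension `d` is such that `A^k` contains a full line `𝔽_p · v`, `v ≠ 0`, then
`A^{k·d + d²} = 𝔤`. -/
theorem stmt3 (p : ℕ) [Fact p.Prime] [LieAlgebra (ZMod p) L] [Module.Finite (ZMod p) L]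
    [LieAlgebra.IsSimple (ZMod p) L]
    (A : Set L) (hA : LieSubalgebra.lieSpan (ZMod p) L A = ⊤)
    (k : ℕ) (v : L) (hv : v ≠ 0) (hline : ∀ α : ZMod p, α • v ∈ ball A k) :
    ball A (k * Module.finrank (ZMod p) L + Module.finrank (ZMod p) L ^ 2) = Set.univ := by
  set d := Module.finrank (ZMod p) L
  have : Nontrivial L := ⟨⟨v, 0, hv⟩⟩
  have hd : 0 < d := Module.finrank_pos
  have hk : 0 < k := pos_of_mem_ball (hline 0)
  have hball : ∀ x, x ∈ ball A (d * (k + (d - 1))) :=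
    mem_ball_of_span_eq_top (span_towers_eq_top hA hv) (by omega)
      fun _ hw α => smul_mem_ball_of_mem_towers hline hw α
  have hle : d * (k + (d - 1)) ≤ k * d + d ^ 2 := by
    calc d * (k + (d - 1)) ≤ d * (k + d) := Nat.mul_le_mul_left d (by omega)
      _ = k * d + d ^ 2 := by ring
  exact Set.eq_univ_of_forall fun x => ball_mono (Nat.mul_pos hd (by omega)) hle (hball x)
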